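/- arXiv:0901.4888 — 2 statements merged into one kernel-verified Lean document; each statement's English description precedes it below -/
import Mathlib

section
/- Let L be a bounded distributive lattice and f : L → L a unary function. The following conditions are equivalent: (i) f is a lattice polynomial function; (ii) f satisfies condition (H) (i.e., f(x ∧ c) = f(x) ∧ c for every x ∈ L and every c with f(0) ≤ c ≤ f(1)) and f preserves ∨; (iii) f satisfies condition (I) (i.e., f(c) = c for every c with f(0) ≤ c ≤ f(1)) and f preserves ∧ and ∨. -/
open Classical

variable {L : Type*}

section Defs

variable [DistribLattice L] [BoundedOrder L]

/-- The ternary median term. -/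
def med (x y z : L) : L := (x ⊔ y) ⊓ (x ⊔ z) ⊓ (y ⊔ z)

/-- Lattice polynomial functions of arity `n`: the smallest class of functions
`(Fin n → L) → L` containing projections and constants and closed under
pointwise binary meets and joins. -/
inductive IsLatticePolynomial {n : ℕ} : ((Fin n → L) → L) → Prop
  | proj (k : Fin n) : IsLatticePolynomial fun x => x k
  | const (c : L) : IsLatticePolynomial fun _ => c
  | inf {f g : (Fin n → L) → L} :
      IsLatticePolynomial f → IsLatticePolynomial g →
      IsLatticePolynomial fun x => f x ⊓ g x
  | sup {f g : (Fin n → L) → L} :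
      IsLatticePolynomial f → IsLatticePolynomial g →
      IsLatticePolynomial fun x => f x ⊔ g x

/-- Unary lattice polynomial functions: the smallest class of functions `L → L`
containing the identity and constants and closed under pointwise binary meets
and joins. -/
inductive IsUnaryLatticePolynomial : (L → L) → Prop
  | id : IsUnaryLatticePolynomial fun x : L => x
  | const (c : L) : IsUnaryLatticePolynomial fun _ => c
  | inf {f g : L → L} :
      IsUnaryLatticePolynomial f → IsUnaryLatticePolynomial g →
      IsUnaryLatticePolynomial fun x => f x ⊓ g x
  | sup {f g : L → L} :
      IsUnaryLatticePolynomial f → IsUnaryLatticePolynomial g →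
      IsUnaryLatticePolynomial fun x => f x ⊔ g x

/-- `h : L → L` preserves binary meets. -/
def PreservesInf (h : L → L) : Prop := ∀ x y : L, h (x ⊓ y) = h x ⊓ h y

/-- `h : L → L` preserves binary joins. -/
def PreservesSup (h : L → L) : Prop := ∀ x y : L, h (x ⊔ y) = h x ⊔ h y

/-- Condition (H): `f(x ∧ c̄) = f(x) ∧ c` for all `c ∈ [f(0̄), f(1̄)]`. -/
def CondH {n : ℕ} (f : (Fin n → L) → L) : Prop :=
  ∀ (x : Fin n → L) (c : L), f (fun _ => ⊥) ≤ c → c ≤ f (fun _ => ⊤) →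
    (f fun i => x i ⊓ c) = f x ⊓ c

/-- Condition (H*), the dual of (H): `f(x ∨ c̄) = f(x) ∨ c` for all `c ∈ [f(0̄), f(1̄)]`. -/
def CondHDual {n : ℕ} (f : (Fin n → L) → L) : Prop :=
  ∀ (x : Fin n → L) (c : L), f (fun _ => ⊥) ≤ c → c ≤ f (fun _ => ⊤) →
    (f fun i => x i ⊔ c) = f x ⊔ c

/-- Condition (V): `f(x) = f(x ∧ c̄) ∨ f([x]_c)` for all `c ∈ [f(0̄), f(1̄)]`,
where the `i`-th component of `[x]_c` is `0` if `x i ≤ c`, and `x i` otherwise. -/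
def CondV {n : ℕ} (f : (Fin n → L) → L) : Prop :=
  ∀ (x : Fin n → L) (c : L), f (fun _ => ⊥) ≤ c → c ≤ f (fun _ => ⊤) →
    f x = (f fun i => x i ⊓ c) ⊔ (f fun i => if x i ≤ c then ⊥ else x i)

/-- Condition (V*), the dual of (V): `f(x) = f(x ∨ c̄) ∧ f([x]^c)` for all
`c ∈ [f(0̄), f(1̄)]`, where the `i`-th component of `[x]^c` is `1` if `c ≤ x i`,
and `x i` otherwise. -/
def CondVDual {n : ℕ} (f : (Fin n → L) → L) : Prop :=
  ∀ (x : Fin n → L) (c : L), f (fun _ => ⊥) ≤ c → c ≤ f (fun _ => ⊤) →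
    f x = (f fun i => x i ⊔ c) ⊓ (f fun i => if c ≤ x i then ⊤ else x i)

/-- Condition (I): `f(c̄) = c` for all `c ∈ [f(0̄), f(1̄)]`. -/
def CondI {n : ℕ} (f : (Fin n → L) → L) : Prop :=
  ∀ c : L, f (fun _ => ⊥) ≤ c → c ≤ f (fun _ => ⊤) → f (fun _ => c) = c

/-- A subset `S` of `L` is convex if `a ≤ b ≤ c` with `a, c ∈ S` implies `b ∈ S`. -/
def IsConvexSubset (S : Set L) : Prop :=
  ∀ ⦃a b c : L⦄, a ∈ S → c ∈ S → a ≤ b → b ≤ c → b ∈ S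

/-- For every function `g = f_K^a` obtained from `f` by substituting constants for
variables (including `K = ∅`, i.e. `g = f`), the diagonal `δ_g` preserves binary meets.
Here `δ_{f_K^a}(x) = f(y)` where `y i = a i` for `i ∈ K` and `y i = x` otherwise. -/
def DiagSubstPreservesInf {n : ℕ} (f : (Fin n → L) → L) : Prop :=
  ∀ (K : Set (Fin n)) (a : Fin n → L) (x y : L),
    (f fun i => if i ∈ K then a i else x ⊓ y) =
      (f fun i => if i ∈ K then a i else x) ⊓ (f fun i => if i ∈ K then a i else y)

/-- For every function `g = f_K^a` obtained from `f` by substituting constants for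
variables (including `K = ∅`, i.e. `g = f`), the diagonal `δ_g` preserves binary joins. -/
def DiagSubstPreservesSup {n : ℕ} (f : (Fin n → L) → L) : Prop :=
  ∀ (K : Set (Fin n)) (a : Fin n → L) (x y : L),
    (f fun i => if i ∈ K then a i else x ⊔ y) =
      (f fun i => if i ∈ K then a i else x) ⊔ (f fun i => if i ∈ K then a i else y)

end Defs


/-!
Every unary lattice polynomial has the normal form `f x = f ⊥ ⊔ (x ⊓ f ⊤)` with `f ⊥ ≤ f ⊤`,
and the conditions (H) and (I) and preservation of `∧` and `∨` are read off this form.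
Conversely, a join-preserving `f` is monotone, and both (H) and (I) together with
`∧`-preservation give `f (x ⊓ f ⊤) = f x` and `f c = c` on `[f ⊥, f ⊤]`. Then for
`y = x ⊓ f ⊤` the element `f ⊥ ⊔ y` lies in `[f ⊥, f ⊤]`, so
`f ⊥ ⊔ y = f (f ⊥ ⊔ y) = f (f ⊥) ⊔ f y = f ⊥ ⊔ f x = f x`.
-/

section UnaryPolynomial

variable [DistribLattice L] [BoundedOrder L] {f : L → L}

def UnaryCondH (f : L → L) : Prop :=
  ∀ x c : L, f ⊥ ≤ c → c ≤ f ⊤ → f (x ⊓ c) = f x ⊓ c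

def UnaryCondI (f : L → L) : Prop :=
  ∀ c : L, f ⊥ ≤ c → c ≤ f ⊤ → f c = c

omit [BoundedOrder L] in
theorem isUnaryLatticePolynomial_sup_inf (a b : L) :
    IsUnaryLatticePolynomial fun x => a ⊔ x ⊓ b :=
  .sup (.const a) (.inf .id (.const b))

omit [BoundedOrder L] in
theorem sup_inf_inf_sup_inf {a b a' b' : L} (x : L) (hab : a ≤ b) (hab' : a' ≤ b') :
    (a ⊔ x ⊓ b) ⊓ (a' ⊔ x ⊓ b') = a ⊓ a' ⊔ x ⊓ (b ⊓ b') := by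
  rw [← sup_inf_assoc_of_le x hab, ← sup_inf_assoc_of_le x hab',
    ← sup_inf_assoc_of_le x (inf_le_inf hab hab'), sup_inf_right, inf_inf_inf_comm]

theorem IsUnaryLatticePolynomial.eq_sup_inf (hf : IsUnaryLatticePolynomial f) (x : L) :
    f x = f ⊥ ⊔ x ⊓ f ⊤ := by
  induction hf generalizing x with
  | id => simp
  | const c => simp
  | @inf g h _ _ ihg ihh =>
    have hg : g ⊥ ≤ g ⊤ := by simpa using ihg ⊤
    have hh : h ⊥ ≤ h ⊤ := by simpa using ihh ⊤
    dsimp only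
    rw [ihg x, ihh x]
    exact sup_inf_inf_sup_inf x hg hh
  | @sup g h _ _ ihg ihh =>
    dsimp only
    rw [ihg x, ihh x, inf_sup_left, sup_sup_sup_comm]

omit [BoundedOrder L] in
theorem PreservesSup.monotone (hf : PreservesSup f) : Monotone f := fun a b hab => by
  rw [← sup_eq_right.mpr hab, hf]
  exact le_sup_left

namespace IsUnaryLatticePolynomial

variable (hf : IsUnaryLatticePolynomial f)
include hf

theorem preservesSup : PreservesSup f := fun x y => by
  rw [hf.eq_sup_inf (x ⊔ y), hf.eq_sup_inf x, hf.eq_sup_inf y, inf_sup_right,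
    sup_sup_sup_comm, sup_idem]

theorem preservesInf : PreservesInf f := fun x y => by
  rw [hf.eq_sup_inf (x ⊓ y), hf.eq_sup_inf x, hf.eq_sup_inf y, ← sup_inf_left,
    inf_inf_distrib_right]

theorem unaryCondH : UnaryCondH f := fun x c hc₀ hc₁ => by
  rw [hf.eq_sup_inf (x ⊓ c), hf.eq_sup_inf x, inf_sup_right, inf_eq_left.mpr hc₀,
    inf_right_comm, inf_assoc x, inf_eq_right.mpr hc₁]

theorem unaryCondI : UnaryCondI f := fun c hc₀ hc₁ => by
  rw [hf.eq_sup_inf c, inf_eq_left.mpr hc₁, sup_eq_right.mpr hc₀]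

end IsUnaryLatticePolynomial

theorem UnaryCondH.unaryCondI (hH : UnaryCondH f) : UnaryCondI f := fun c hc₀ hc₁ => by
  simpa [inf_eq_right.mpr hc₁] using hH ⊤ c hc₀ hc₁

theorem UnaryCondH.map_inf_map_top (hH : UnaryCondH f) (hf : Monotone f) (x : L) :
    f (x ⊓ f ⊤) = f x := by
  rw [hH x (f ⊤) (hf bot_le) le_rfl, inf_eq_left.mpr (hf le_top)]

theorem UnaryCondI.map_inf_map_top (hI : UnaryCondI f) (hinf : PreservesInf f)
    (hf : Monotone f) (x : L) : f (x ⊓ f ⊤) = f x := by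
  rw [hinf, hI (f ⊤) (hf bot_le) le_rfl, inf_eq_left.mpr (hf le_top)]

theorem UnaryCondI.isUnaryLatticePolynomial (hI : UnaryCondI f) (hsup : PreservesSup f)
    (hfix : ∀ x, f (x ⊓ f ⊤) = f x) : IsUnaryLatticePolynomial f := by
  have hmono := hsup.monotone
  suffices ∀ x, f x = f ⊥ ⊔ x ⊓ f ⊤ from
    funext this ▸ isUnaryLatticePolynomial_sup_inf (f ⊥) (f ⊤)
  intro x
  have hmem : f (f ⊥ ⊔ x ⊓ f ⊤) = f ⊥ ⊔ x ⊓ f ⊤ :=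
    hI _ le_sup_left (sup_le (hmono bot_le) inf_le_right)
  rw [← hmem, hsup, hI (f ⊥) le_rfl (hmono bot_le), hfix, sup_eq_right.mpr (hmono bot_le)]

end UnaryPolynomial

/-- For a unary function `f : L → L`, the following are equivalent:
(i) `f` is a lattice polynomial function; (ii) `f` satisfies condition (H) and
preserves `∨`; (iii) `f` satisfies condition (I) and preserves `∧` and `∨`. -/
theorem isUnaryLatticePolynomial_iff_condH_iff_condI
    {L : Type*} [DistribLattice L] [BoundedOrder L] (f : L → L) :
    (IsUnaryLatticePolynomial f ↔
      ((∀ (x c : L), f ⊥ ≤ c → c ≤ f ⊤ → f (x ⊓ c) = f x ⊓ c) ∧ PreservesSup f)) ∧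
    (IsUnaryLatticePolynomial f ↔
      ((∀ c : L, f ⊥ ≤ c → c ≤ f ⊤ → f c = c) ∧ PreservesInf f ∧ PreservesSup f)) := by
  refine ⟨⟨fun hf => ⟨hf.unaryCondH, hf.preservesSup⟩, ?_⟩,
    ⟨fun hf => ⟨hf.unaryCondI, hf.preservesInf, hf.preservesSup⟩, ?_⟩⟩
  · rintro ⟨hH, hsup⟩
    exact UnaryCondI.isUnaryLatticePolynomial (UnaryCondH.unaryCondI hH) hsup
      (UnaryCondH.map_inf_map_top hH hsup.monotone)
  · rintro ⟨hI, hinf, hsup⟩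
    exact UnaryCondI.isUnaryLatticePolynomial hI hsup
      (UnaryCondI.map_inf_map_top hI hinf hsup.monotone)
end

section
/- Let L be a bounded distributive lattice and let f : Lⁿ → L (n > 1) be an order-preserving function satisfying condition (H) and condition (V). Then for every k with 1 ≤ k ≤ n and every a ∈ L, the function f_k^a : L^{n−1} → L obtained from f by substituting the constant a for the kth variable also satisfies condition (H) and condition (V) (with the interval bounds given by f_k^a's own values at the constant 0 and constant 1 vectors). -/
open Classical

variable {L : Type*}

/-! Let `c ∈ [f_k^a(0̄), f(1̄)]`. If every component of `y` other than the `k`th lies below `c`,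
then `[y]_c` is below `0̄` with `a` at `k`, so `f([y]_c) ≤ c`; by (V) and (H),
`f(y) = (f(y) ∧ c) ∨ f([y]_c) ≤ c`, hence `f(y) = f(y ∧ c̄)`. Applied to `y = x ∧ c̄` with `a` at `k`,
this lets the meet with `c̄` pass through the substitution:
`f_k^a(x ∧ c̄) = f((x with a at k) ∧ c̄)`. Conditions (H) and (V) for `f_k^a` then follow from
those for `f`, since `[x with a at k]_c ≤ [x]_c with a at k`. -/

open Function

/-- The vector `[x]_c` of condition (V). -/
noncomputable def cut {ι : Type*} [LE L] [OrderBot L] (c : L) (x : ι → L) : ι → L :=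
  fun i => if x i ≤ c then ⊥ else x i

section Cut

variable {ι : Type*} [Preorder L] [OrderBot L] {c : L} {x : ι → L}

theorem cut_le : cut c x ≤ x := fun i => by
  unfold cut
  split_ifs
  exacts [bot_le, le_rfl]

theorem cut_eq_bot_of_le (h : ∀ i, x i ≤ c) : cut c x = ⊥ :=
  funext fun i => if_pos (h i)

theorem cut_update_le [DecidableEq ι] (k : ι) (a : L) :
    cut c (update x k a) ≤ update (cut c x) k a := by
  refine le_update_iff.2 ⟨cut_le k |>.trans (update_self k a x).le, fun j hj => ?_⟩
  simp only [cut, update_of_ne hj, le_refl]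

end Cut

theorem update_inf_const_inf_const {ι : Type*} [DecidableEq ι] [SemilatticeInf L]
    (x : ι → L) (k : ι) (a c : L) :
    (fun i => update (fun j => x j ⊓ c) k a i ⊓ c) = fun i => update x k a i ⊓ c := by
  funext i
  rcases eq_or_ne i k with rfl | hi
  · simp only [update_self]
  · simp only [update_of_ne hi, inf_assoc, inf_idem]

section Conditions

variable [DistribLattice L] [BoundedOrder L] {n : ℕ} {f : (Fin n → L) → L}

theorem apply_inf_const_of_apply_cut_le (hH : CondH f) (hV : CondV f) {x : Fin n → L} {c : L}
    (h0 : f (fun _ => ⊥) ≤ c) (h1 : c ≤ f (fun _ => ⊤)) (hcut : f (cut c x) ≤ c) :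
    f (fun i => x i ⊓ c) = f x := by
  have hle : f x ≤ c := by
    rw [hV x c h0 h1, hH x c h0 h1]
    exact sup_le inf_le_right hcut
  rw [hH x c h0 h1, inf_eq_left.2 hle]

/-- `f_k^a`, encoded as a function on `Lⁿ` that ignores its `k`th argument. -/
def substConst (f : (Fin n → L) → L) (k : Fin n) (a : L) : (Fin n → L) → L :=
  fun x => f (update x k a)

variable {k : Fin n} {a c : L}

theorem substConst_inf_const (hf : Monotone f) (hH : CondH f) (hV : CondV f) (x : Fin n → L)
    (h0 : substConst f k a (fun _ => ⊥) ≤ c) (h1 : c ≤ f (fun _ => ⊤)) :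
    substConst f k a (fun i => x i ⊓ c) = f (fun i => update x k a i ⊓ c) := by
  have hcut : f (cut c (update (fun i => x i ⊓ c) k a)) ≤ c := calc
    _ ≤ f (update (cut c fun i => x i ⊓ c) k a) := hf (cut_update_le k a)
    _ = substConst f k a (fun _ => ⊥) := by rw [cut_eq_bot_of_le fun _ => inf_le_right]; rfl
    _ ≤ c := h0
  rw [← update_inf_const_inf_const,
    apply_inf_const_of_apply_cut_le hH hV ((hf bot_le).trans h0) h1 hcut]
  rfl

theorem condH_substConst (hf : Monotone f) (hH : CondH f) (hV : CondV f) :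
    CondH (substConst f k a) := fun x c h0 h1 => by
  rw [substConst_inf_const hf hH hV x h0 (h1.trans (hf le_top)),
    hH _ c ((hf bot_le).trans h0) (h1.trans (hf le_top))]
  rfl

theorem condV_substConst (hf : Monotone f) (hH : CondH f) (hV : CondV f) :
    CondV (substConst f k a) := fun x c h0 h1 => by
  have h1' : c ≤ f (fun _ => ⊤) := h1.trans (hf le_top)
  have hx_le : ∀ y ≤ x, substConst f k a y ≤ substConst f k a x := fun y hy =>
    hf (update_le_update_iff.2 ⟨le_rfl, fun j _ => hy j⟩)
  refine le_antisymm ?_ (sup_le (hx_le _ fun i => inf_le_left) (hx_le _ cut_le))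
  calc substConst f k a x
      = f (fun i => update x k a i ⊓ c) ⊔ f (cut c (update x k a)) :=
        hV _ c ((hf bot_le).trans h0) h1'
    _ ≤ substConst f k a (fun i => x i ⊓ c) ⊔ substConst f k a (cut c x) := by
        rw [substConst_inf_const hf hH hV x h0 h1']
        exact sup_le_sup_left (hf (cut_update_le k a)) _

end Conditions

theorem subst_condH_condV_of_condH_condV_general
    {L : Type*} [DistribLattice L] [BoundedOrder L] {n : ℕ}
    (f : (Fin n → L) → L) (hf : Monotone f)
    (hH : CondH f) (hV : CondV f) (k : Fin n) (a : L) :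
    CondH (fun x : Fin n → L => f (Function.update x k a)) ∧
      CondV (fun x : Fin n → L => f (Function.update x k a)) :=
  ⟨condH_substConst hf hH hV, condV_substConst hf hH hV⟩

/-- If an order-preserving function `f : Lⁿ → L` (`n > 1`) satisfies
conditions (H) and (V), then for every `k` and `a ∈ L`, the function `f_k^a` obtained
by fixing the `k`-th variable to `a` also satisfies (H) and (V) (with bounds given by
its own values at the constant `0` and `1` vectors). Here `f_k^a` is encoded as the
function on `Lⁿ` ignoring the `k`-th coordinate: `x ↦ f(update x k a)`. -/
theorem subst_condH_condV_of_condH_condV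
    {L : Type*} [DistribLattice L] [BoundedOrder L] {n : ℕ} (hn : 1 < n)
    (f : (Fin n → L) → L) (hf : Monotone f)
    (hH : CondH f) (hV : CondV f) (k : Fin n) (a : L) :
    CondH (fun x : Fin n → L => f (Function.update x k a)) ∧
      CondV (fun x : Fin n → L => f (Function.update x k a)) :=
  subst_condH_condV_of_condH_condV_general f hf hH hV k a
end
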